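/- arXiv:2301.01121 — 7 statements merged into one kernel-verified Lean document; each statement's English description precedes it below -/
import Mathlib

section
/- For any odd positive integer k and nonnegative integer s, the number of fixed-point free involutions commuting with a permutation consisting of 2s disjoint k-cycles (on a set of size 2sk) that permute these cycles among themselves is k^s (2s-1)!!; and for a permutation consisting of an odd number of disjoint k-cycles with k odd, no commuting fixed-point free involution exists. -/
/-!
A fixed-point-free involution `ι` commuting with `α` never maps a point `x` into its own cycle:
`ι x = αⁿ x` gives `α²ⁿ x = x`, and as the cycle length `k` is odd, `αⁿ x = x`. Once `y = ι x` is
chosen outside that cycle (`k (m - 1)` choices), commutation forces `ι (αⁿ x) = αⁿ y`, so `ι`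
agrees on the two cycles with the involution `τ` swapping them along `αⁿ x ↦ αⁿ y`; left
multiplication by `τ` then identifies these `ι` with the commuting matchings of the remaining
`m - 2` cycles. Hence the count satisfies `c m = k (m - 1) c (m - 2)`, `c 0 = 1`, `c 1 = 0`.
-/

open Equiv Equiv.Perm Function Finset

def commMatchingCount (k : ℕ) : ℕ → ℕ
  | 0 => 1
  | 1 => 0
  | m + 2 => k * (m + 1) * commMatchingCount k m

theorem commMatchingCount_eq_of_pos (k : ℕ) {m : ℕ} (hm : 0 < m) :
    commMatchingCount k m = k * (m - 1) * commMatchingCount k (m - 2) := by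
  match m, hm with
  | 1, _ => simp [commMatchingCount]
  | m + 2, _ => rfl

open scoped Nat in
theorem commMatchingCount_two_mul (k s : ℕ) :
    commMatchingCount k (2 * s) = k ^ s * (2 * s - 1)‼ := by
  induction s with
  | zero => rfl
  | succ s ih =>
    rw [Nat.mul_succ, commMatchingCount, ih, show 2 * s + 2 - 1 = 2 * s + 1 by omega,
      Nat.doubleFactorial_add_one, pow_succ]
    ring

theorem commMatchingCount_of_odd (k : ℕ) {m : ℕ} (hm : Odd m) : commMatchingCount k m = 0 := by
  obtain ⟨s, rfl⟩ := hm
  induction s with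
  | zero => rfl
  | succ s ih => rw [show 2 * (s + 1) + 1 = 2 * s + 1 + 2 by ring, commMatchingCount, ih, mul_zero]

namespace Equiv.Perm

variable {X : Type*} {α : Perm X}

theorem zpow_apply_eq_self_iff {x : X} {n : ℤ} :
    (α ^ n) x = x ↔ (minimalPeriod α x : ℤ) ∣ n :=
  MulAction.zpow_smul_eq_iff_minimalPeriod_dvd (a := α) (b := x)

theorem zpow_apply_eq_zpow_apply_iff {x : X} {i j : ℤ} :
    (α ^ i) x = (α ^ j) x ↔ (minimalPeriod α x : ℤ) ∣ i - j := by
  have h : α ^ i = α ^ j * α ^ (i - j) := by rw [← zpow_add, add_sub_cancel]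
  rw [h, mul_apply, (α ^ j).injective.eq_iff, zpow_apply_eq_self_iff]

theorem sameCycle_iff_mem_orbit {x z : X} :
    α.SameCycle x z ↔ z ∈ MulAction.orbit (Subgroup.zpowers α) x := by
  constructor
  · rintro ⟨n, rfl⟩
    exact ⟨⟨α ^ n, n, rfl⟩, rfl⟩
  · rintro ⟨⟨_, n, rfl⟩, rfl⟩
    exact ⟨n, rfl⟩

theorem apply_apply_of_mul_self_eq_one {ι : Perm X} (hι : ι * ι = 1) (x : X) : ι (ι x) = x :=
  Equiv.congr_fun hι x

theorem apply_eq_apply_of_sameCycle {σ τ : Perm X} (hσ : Commute σ α) (hτ : Commute τ α)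
    {x z : X} (hx : σ x = τ x) (hz : α.SameCycle x z) : σ z = τ z := by
  obtain ⟨n, rfl⟩ := hz
  rw [← mul_apply, (hσ.zpow_right n).eq, mul_apply, hx, ← mul_apply, ← (hτ.zpow_right n).eq,
    mul_apply]

theorem not_sameCycle_apply_of_odd {ι : Perm X} (hι : ι * ι = 1) (hια : Commute ι α) {x : X}
    (hodd : Odd (minimalPeriod α x)) (hx : ι x ≠ x) : ¬α.SameCycle x (ι x) := by
  rintro ⟨n, hn⟩
  have h2n : (α ^ (n * 2)) x = x := by
    rw [mul_two, zpow_add, mul_apply, hn, ← mul_apply, ← (hια.zpow_right n).eq, mul_apply, hn,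
      apply_apply_of_mul_self_eq_one hι]
  have hcop : IsCoprime (minimalPeriod α x : ℤ) 2 :=
    Nat.isCoprime_iff_coprime.mpr (Nat.coprime_two_right.mpr hodd)
  have hn0 : (α ^ n) x = x :=
    zpow_apply_eq_self_iff.mpr (hcop.dvd_of_dvd_mul_right (zpow_apply_eq_self_iff.mp h2n))
  exact hx (hn.symm.trans hn0)

open Classical in
/-- On the cycle of `x`, the `α`-equivariant map sending `x` to `y`; well defined as soon as the
period of `y` divides that of `x`. -/
noncomputable def cycleTransfer (α : Perm X) (x y z : X) : X :=
  if h : α.SameCycle x z then (α ^ h.choose) y else z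

theorem cycleTransfer_zpow_apply {x y : X} (hp : minimalPeriod α y ∣ minimalPeriod α x)
    (n : ℤ) : cycleTransfer α x y ((α ^ n) x) = (α ^ n) y := by
  have h : α.SameCycle x ((α ^ n) x) := ⟨n, rfl⟩
  rw [cycleTransfer, dif_pos h, zpow_apply_eq_zpow_apply_iff]
  exact (Int.natCast_dvd_natCast.mpr hp).trans (zpow_apply_eq_zpow_apply_iff.mp h.choose_spec)

theorem cycleTransfer_of_not_sameCycle {x y z : X} (h : ¬α.SameCycle x z) :
    cycleTransfer α x y z = z := by
  rw [cycleTransfer, dif_neg h]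

open Classical in
noncomputable def cycleSwap (α : Perm X) (x y z : X) : X :=
  if α.SameCycle x z then cycleTransfer α x y z else cycleTransfer α y x z

section cycleSwap

variable {x y : X}

theorem cycleSwap_of_not_sameCycle {z : X} (hx : ¬α.SameCycle x z) (hy : ¬α.SameCycle y z) :
    cycleSwap α x y z = z := by
  rw [cycleSwap, if_neg hx, cycleTransfer_of_not_sameCycle hy]

variable (hxy : ¬α.SameCycle x y) (hp : minimalPeriod α x = minimalPeriod α y)
include hp

theorem cycleSwap_zpow_apply_left (n : ℤ) : cycleSwap α x y ((α ^ n) x) = (α ^ n) y := by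
  rw [cycleSwap, if_pos ⟨n, rfl⟩, cycleTransfer_zpow_apply hp.symm.dvd]

include hxy

theorem cycleSwap_zpow_apply_right (n : ℤ) : cycleSwap α x y ((α ^ n) y) = (α ^ n) x := by
  rw [cycleSwap, if_neg (sameCycle_zpow_right.not.mpr hxy), cycleTransfer_zpow_apply hp.dvd]

theorem cycleSwap_involutive : Involutive (cycleSwap α x y) := by
  intro z
  by_cases hx : α.SameCycle x z
  · obtain ⟨n, rfl⟩ := hx
    rw [cycleSwap_zpow_apply_left hp, cycleSwap_zpow_apply_right hxy hp]
  by_cases hy : α.SameCycle y z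
  · obtain ⟨n, rfl⟩ := hy
    rw [cycleSwap_zpow_apply_right hxy hp, cycleSwap_zpow_apply_left hp]
  rw [cycleSwap_of_not_sameCycle hx hy, cycleSwap_of_not_sameCycle hx hy]

end cycleSwap

section Fintype

variable [Fintype X] [DecidableEq X]

def cycleFinset (α : Perm X) (x : X) : Finset X := {z | α.SameCycle x z}

@[simp]
theorem mem_cycleFinset {x z : X} : z ∈ α.cycleFinset x ↔ α.SameCycle x z := by
  simp [cycleFinset]

theorem card_cycleFinset (α : Perm X) (x : X) : #(α.cycleFinset x) = minimalPeriod α x := by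
  classical
  have : α.cycleFinset x = (MulAction.orbit (Subgroup.zpowers α) x).toFinset := by
    ext z
    rw [mem_cycleFinset, Set.mem_toFinset, sameCycle_iff_mem_orbit]
  rw [this, Set.toFinset_card]
  exact (MulAction.minimalPeriod_eq_card α x).symm

theorem disjoint_cycleFinset {x y : X} (hxy : ¬α.SameCycle x y) :
    _root_.Disjoint (α.cycleFinset x) (α.cycleFinset y) :=
  disjoint_left.mpr fun _ hx hy => hxy ((mem_cycleFinset.mp hx).trans (mem_cycleFinset.mp hy).symm)

def IsCommMatching (α : Perm X) (s : Finset X) (ι : Perm X) : Prop :=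
  ι * ι = 1 ∧ ι.support = s ∧ Commute ι α

theorem isCommMatching_empty_iff {ι : Perm X} : IsCommMatching α ∅ ι ↔ ι = 1 := by
  refine ⟨fun h => support_eq_empty_iff.mp h.2.1, ?_⟩
  rintro rfl
  exact ⟨one_mul 1, support_one, Commute.one_left α⟩

theorem exists_isCommMatching_swap {x y : X} (hxy : ¬α.SameCycle x y)
    (hp : minimalPeriod α x = minimalPeriod α y) :
    ∃ τ : Perm X, IsCommMatching α (α.cycleFinset x ∪ α.cycleFinset y) τ ∧ τ x = y := by
  have hne : x ≠ y := fun h => hxy (h ▸ SameCycle.refl α x)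
  refine ⟨(cycleSwap_involutive hxy hp).toPerm, ⟨?_, ?_, ?_⟩, ?_⟩
  · ext z
    exact cycleSwap_involutive hxy hp z
  · ext z
    rw [mem_support, mem_union, mem_cycleFinset, mem_cycleFinset, Involutive.coe_toPerm]
    by_cases hx : α.SameCycle x z
    · obtain ⟨n, rfl⟩ := hx
      simpa [cycleSwap_zpow_apply_left hp, SameCycle.refl] using hne.symm
    by_cases hy : α.SameCycle y z
    · obtain ⟨n, rfl⟩ := hy
      simpa [cycleSwap_zpow_apply_right hxy hp, SameCycle.refl] using hne
    simp [cycleSwap_of_not_sameCycle hx hy, hx, hy]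
  · ext z
    change cycleSwap α x y (α z) = α (cycleSwap α x y z)
    by_cases hx : α.SameCycle x z
    · obtain ⟨n, rfl⟩ := hx
      rw [← mul_apply α, ← zpow_one_add, cycleSwap_zpow_apply_left hp,
        cycleSwap_zpow_apply_left hp, zpow_one_add, mul_apply]
    by_cases hy : α.SameCycle y z
    · obtain ⟨n, rfl⟩ := hy
      rw [← mul_apply α, ← zpow_one_add, cycleSwap_zpow_apply_right hxy hp,
        cycleSwap_zpow_apply_right hxy hp, zpow_one_add, mul_apply]
    rw [cycleSwap_of_not_sameCycle hx hy, cycleSwap_of_not_sameCycle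
      (sameCycle_apply_right.not.mpr hx) (sameCycle_apply_right.not.mpr hy)]
  · simpa using cycleSwap_zpow_apply_left hp 0

theorem isCommMatching_sdiff_iff {τ ι : Perm X} {s : Finset X} {x y : X}
    (hτ : IsCommMatching α (α.cycleFinset x ∪ α.cycleFinset y) τ) (hτx : τ x = y)
    (hs : α.cycleFinset x ∪ α.cycleFinset y ⊆ s) :
    IsCommMatching α (s \ (α.cycleFinset x ∪ α.cycleFinset y)) (τ * ι) ↔
      IsCommMatching α s ι ∧ ι x = y := by
  obtain ⟨hτ2, hτsupp, hτα⟩ := hτ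
  rw [← hτsupp] at hs ⊢
  have hxτ : x ∈ τ.support := hτsupp ▸ mem_union_left _ (mem_cycleFinset.mpr (.refl α x))
  have hι : ι = τ * (τ * ι) := by rw [← mul_assoc, hτ2, one_mul]
  have hsq : ∀ σ : Perm X, Disjoint τ σ → (τ * σ) * (τ * σ) = σ * σ := fun σ hd => by
    rw [hd.symm.commute.mul_mul_mul_comm, hτ2, one_mul]
  constructor
  · rintro ⟨h2, hsupp, hcomm⟩
    have hd : Disjoint τ (τ * ι) := disjoint_iff_disjoint_support.mpr (hsupp ▸ disjoint_sdiff)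
    refine ⟨⟨?_, ?_, ?_⟩, ?_⟩
    · rw [hι, hsq _ hd, h2]
    · rw [hι, hd.support_mul, hsupp, union_sdiff_of_subset hs]
    · rw [hι]
      exact hτα.mul_left hcomm
    · have hx : (τ * ι) x = x := notMem_support.mp fun h => (mem_sdiff.mp (hsupp ▸ h)).2 hxτ
      rw [hι, mul_apply, hx, hτx]
  · rintro ⟨⟨h2, hsupp, hcomm⟩, hx⟩
    have hy : ι y = τ y := by
      rw [← hx, apply_apply_of_mul_self_eq_one h2, hx, ← hτx, apply_apply_of_mul_self_eq_one hτ2]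
    have hagree : ∀ z ∈ τ.support, ι z = τ z := fun z hz => by
      rcases mem_union.mp (hτsupp ▸ hz) with hz | hz
      · exact apply_eq_apply_of_sameCycle hcomm hτα (hx.trans hτx.symm) (mem_cycleFinset.mp hz)
      · exact apply_eq_apply_of_sameCycle hcomm hτα hy (mem_cycleFinset.mp hz)
    have hd : Disjoint τ (τ * ι) := fun z => by
      by_cases hz : z ∈ τ.support
      · exact Or.inr (by rw [mul_apply, hagree z hz, apply_apply_of_mul_self_eq_one hτ2])
      · exact Or.inl (notMem_support.mp hz)
    refine ⟨?_, ?_, hτα.mul_left hcomm⟩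
    · rw [← hsq _ hd, ← hι, h2]
    · rw [← hsupp, hι, hd.support_mul, ← hι,
        union_sdiff_cancel_left (disjoint_iff_disjoint_support.mp hd)]

open scoped Classical in
theorem card_isCommMatching_eq_sum {k : ℕ} (hk : Odd k) {s : Finset X}
    (hs : ∀ x ∈ s, α.cycleFinset x ⊆ s) (hα : ∀ x ∈ s, minimalPeriod α x = k)
    {x : X} (hx : x ∈ s) :
    #{ι | IsCommMatching α s ι} = ∑ y ∈ s \ α.cycleFinset x,
      #{ι | IsCommMatching α (s \ (α.cycleFinset x ∪ α.cycleFinset y)) ι} := by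
  have hmaps : ∀ ι ∈ ({ι | IsCommMatching α s ι} : Finset (Perm X)),
      ι x ∈ s \ α.cycleFinset x := by
    intro ι hι
    obtain ⟨h2, hsupp, hcomm⟩ := (mem_filter.mp hι).2
    have hιx : ι x ≠ x := mem_support.mp (hsupp ▸ hx)
    exact mem_sdiff.mpr ⟨hsupp ▸ apply_mem_support.mpr (hsupp ▸ hx),
      mt mem_cycleFinset.mp (not_sameCycle_apply_of_odd h2 hcomm (hα x hx ▸ hk) hιx)⟩
  rw [card_eq_sum_card_fiberwise hmaps]
  refine sum_congr rfl fun y hy => ?_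
  obtain ⟨hys, hxy⟩ := mem_sdiff.mp hy
  obtain ⟨τ, hτ, hτx⟩ :=
    exists_isCommMatching_swap (mt mem_cycleFinset.mpr hxy) ((hα x hx).trans (hα y hys).symm)
  rw [filter_filter]
  exact card_equiv (Equiv.mulLeft τ) fun ι => by
    simp [isCommMatching_sdiff_iff hτ hτx (union_subset (hs x hx) (hs y hys))]

open scoped Classical in
theorem card_isCommMatching {k : ℕ} (hk : Odd k) (m : ℕ) {s : Finset X}
    (hs : ∀ x ∈ s, α.cycleFinset x ⊆ s) (hα : ∀ x ∈ s, minimalPeriod α x = k)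
    (hcard : #s = k * m) : #{ι | IsCommMatching α s ι} = commMatchingCount k m := by
  induction m using Nat.strong_induction_on generalizing s with
  | _ m ih =>
  rcases s.eq_empty_or_nonempty with rfl | ⟨x, hx⟩
  · obtain rfl : m = 0 := by simpa [hk.pos.ne'] using hcard.symm
    simp [isCommMatching_empty_iff, commMatchingCount, filter_eq']
  have hm : 0 < m := Nat.pos_of_mul_pos_left (hcard ▸ card_pos.mpr ⟨x, hx⟩)
  have hrest : ∀ y ∈ s \ α.cycleFinset x,
      #{ι | IsCommMatching α (s \ (α.cycleFinset x ∪ α.cycleFinset y)) ι} =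
        commMatchingCount k (m - 2) := by
    intro y hy
    obtain ⟨hys, hxy⟩ := mem_sdiff.mp hy
    refine ih (m - 2) (by omega) (fun z hz w hw => ?_) (fun z hz => hα z (mem_sdiff.mp hz).1) ?_
    · obtain ⟨hzs, hzU⟩ := mem_sdiff.mp hz
      have hzw := mem_cycleFinset.mp hw
      refine mem_sdiff.mpr ⟨hs z hzs hw, fun hwU => hzU ?_⟩
      simp only [mem_union, mem_cycleFinset] at hwU ⊢
      exact hwU.imp (·.trans hzw.symm) (·.trans hzw.symm)
    · rw [card_sdiff_of_subset (union_subset (hs x hx) (hs y hys)),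
        card_union_of_disjoint (disjoint_cycleFinset (mt mem_cycleFinset.mpr hxy)),
        card_cycleFinset, card_cycleFinset, hα x hx, hα y hys, hcard, Nat.mul_sub, mul_two]
  rw [card_isCommMatching_eq_sum hk hs hα hx, sum_congr rfl hrest, sum_const,
    card_sdiff_of_subset (hs x hx), card_cycleFinset, hα x hx, hcard, ← Nat.mul_sub_one,
    smul_eq_mul, commMatchingCount_eq_of_pos k hm]

end Fintype

end Equiv.Perm

open scoped Classical Nat in
/-- For odd `k`, the number of fixed-point free involutions commuting with a permutation
consisting of `m` disjoint `k`-cycles (every point has minimal period `k`, on a set of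
size `k·m`) is `k^s (2s-1)!!` when `m = 2s`, and `0` when `m` is odd. -/
theorem comm_matchings_odd_cycles {X : Type*} [Fintype X] [DecidableEq X]
    (k m : ℕ) (hk : Odd k) (α : Equiv.Perm X) (hcard : Fintype.card X = k * m)
    (hα : ∀ x : X, Function.minimalPeriod (⇑α) x = k) :
    (∀ s : ℕ, m = 2 * s →
      (Finset.univ.filter fun ι : Equiv.Perm X =>
          ι * ι = 1 ∧ (∀ x, ι x ≠ x) ∧ ι * α = α * ι).card = k ^ s * (2 * s - 1)‼) ∧
    (Odd m →
      (Finset.univ.filter fun ι : Equiv.Perm X =>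
          ι * ι = 1 ∧ (∀ x, ι x ≠ x) ∧ ι * α = α * ι).card = 0) := by
  have hfilter : (Finset.univ.filter fun ι : Equiv.Perm X =>
      ι * ι = 1 ∧ (∀ x, ι x ≠ x) ∧ ι * α = α * ι) =
      ({ι | IsCommMatching α univ ι} : Finset (Perm X)) := by
    ext ι
    simp only [mem_filter, mem_univ, true_and, IsCommMatching, eq_univ_iff_forall,
      Perm.mem_support]
    rfl
  have hcount := card_isCommMatching hk m (fun _ _ => subset_univ _) (fun x _ => hα x)
    (by rw [card_univ, hcard])
  rw [hfilter, hcount]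
  exact ⟨fun s hs => hs ▸ commMatchingCount_two_mul k s, commMatchingCount_of_odd k⟩
end

section
/- For any even positive integer k and nonnegative integer m, the number of fixed-point free involutions commuting with a permutation of cycle type [k^m] equals Σ_{r=0}^{⌊m/2⌋} C(m, 2r) k^r (2r-1)!!. -/
/-!
A permutation of a set of size `k * m` all of whose points have minimal period `k` is conjugate
to the rotation `(i, c) ↦ (i + 1, c)` of `ZMod k × Fin m`. The permutations commuting with this
rotation are the twists `(i, c) ↦ (i + f c, g c)`, and such a twist is a fixed-point-free
involution iff `g` is an involution, `f (g c) = -f c`, and `f c ≠ 0` at the fixed points of `g`.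
For even `k` this forces `f c = k / 2` at those fixed points, so an involution `g` with `r`
transpositions carries exactly `k ^ r` such `f`; and `Fin m` has `C(m, 2r) (2r - 1)!!`
involutions with `r` transpositions.
-/

open Equiv Function Finset
open scoped Nat

lemma Equiv.minimalPeriod_permCongr {X Y : Type*} (e : X ≃ Y) (σ : Perm X) (y : Y) :
    minimalPeriod (e.permCongr σ) y = minimalPeriod σ (e.symm y) := by
  refine minimalPeriod_eq_minimalPeriod_iff.2 fun n => ?_
  rw [IsPeriodicPt, IsPeriodicPt, IsFixedPt, IsFixedPt, ← Perm.coe_pow, ← Perm.coe_pow,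
    show e.permCongr σ ^ n = e.permCongr (σ ^ n) from (map_pow e.permCongrHom σ n).symm]
  exact e.eq_symm_apply.symm

namespace Equiv.Perm

variable {X : Type*} [Fintype X] [DecidableEq X]

lemma orderOf_cycleOf_eq_minimalPeriod (σ : Perm X) (x : X) :
    orderOf (σ.cycleOf x) = minimalPeriod σ x := by
  refine Nat.dvd_right_iff_eq.1 fun n => ?_
  rw [orderOf_dvd_iff_pow_eq_one, ← isPeriodicPt_iff_minimalPeriod_dvd, IsPeriodicPt, IsFixedPt,
    ← coe_pow, ← cycleOf_pow_apply_self]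
  by_cases hx : σ x = x
  · simp [(cycleOf_eq_one_iff σ).2 hx]
  · exact (isCycle_cycleOf σ hx).pow_eq_one_iff' (by rwa [cycleOf_apply_self])

lemma cycleType_eq_replicate_of_forall_minimalPeriod_eq {σ : Perm X} {k : ℕ} (hk : 2 ≤ k)
    (hσ : ∀ x, minimalPeriod σ x = k) : σ.cycleType = .replicate (Fintype.card X / k) k := by
  have hmem : ∀ n ∈ σ.cycleType, n = k := by
    intro n hn
    rw [cycleType_def, Multiset.mem_map] at hn
    obtain ⟨c, hc, rfl⟩ := hn
    obtain ⟨x, hx⟩ := (mem_cycleFactorsFinset_iff.1 hc).1.nonempty_support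
    rw [comp_apply, ← (mem_cycleFactorsFinset_iff.1 hc).1.orderOf, cycle_is_cycleOf hx hc,
      orderOf_cycleOf_eq_minimalPeriod, hσ]
  have hsupp : σ.support = univ := eq_univ_of_forall fun x => mem_support.2 fun hx => by
    have := hσ x
    rw [minimalPeriod_eq_one_iff_isFixedPt.2 hx] at this
    omega
  have hsum := sum_cycleType σ
  rw [Multiset.eq_replicate_card.2 hmem, Multiset.sum_replicate, smul_eq_mul, hsupp,
    card_univ] at hsum
  rw [Multiset.eq_replicate_card.2 hmem, ← hsum, Nat.mul_div_cancel _ (by omega)]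

lemma isConj_of_forall_minimalPeriod_eq {σ τ : Perm X} {k : ℕ} (hk : 2 ≤ k)
    (hσ : ∀ x, minimalPeriod σ x = k) (hτ : ∀ x, minimalPeriod τ x = k) : IsConj σ τ := by
  rw [isConj_iff_cycleType_eq, cycleType_eq_replicate_of_forall_minimalPeriod_eq hk hσ,
    cycleType_eq_replicate_of_forall_minimalPeriod_eq hk hτ]

lemma mul_self_eq_one_iff_forall_mem_cycleType {g : Perm X} :
    g * g = 1 ↔ ∀ n ∈ g.cycleType, n = 2 := by
  rw [← sq, ← orderOf_dvd_iff_pow_eq_one, ← lcm_cycleType, Multiset.lcm_dvd]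
  exact forall₂_congr fun n hn => ⟨fun h => (Nat.le_of_dvd two_pos h).antisymm
    (two_le_of_mem_cycleType hn), fun h => h ▸ dvd_rfl⟩

lemma card_support_eq_two_mul_card_cycleType {g : Perm X} (hg : g * g = 1) :
    #g.support = 2 * Multiset.card g.cycleType := by
  rw [← sum_cycleType,
    Multiset.eq_replicate_card.2 (mul_self_eq_one_iff_forall_mem_cycleType.1 hg),
    Multiset.sum_replicate, Multiset.card_replicate, smul_eq_mul, mul_comm]

lemma card_filter_lt_apply_eq_card_cycleType [LinearOrder X] {g : Perm X} (hg : g * g = 1) :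
    #(univ.filter fun c => c < g c) = Multiset.card g.cycleType := by
  have hgg : ∀ c, g (g c) = c := fun c => congrArg (· c) hg
  have hswap : #(univ.filter fun c => g c < c) = #(univ.filter fun c => c < g c) :=
    card_nbij' g g (fun c hc => by simpa [hgg] using hc) (fun c hc => by simpa [hgg] using hc)
      (fun c _ => hgg c) (fun c _ => hgg c)
  have hsupp : g.support = (univ.filter fun c => c < g c) ∪ univ.filter fun c => g c < c := by
    ext c
    rw [mem_support, mem_union, mem_filter_univ, mem_filter_univ, lt_or_lt_iff_ne, ne_comm]
  have := card_support_eq_two_mul_card_cycleType hg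
  rw [hsupp, card_union_of_disjoint (disjoint_filter.2 fun c _ h h' => lt_asymm h h'),
    hswap] at this
  omega

lemma card_filter_cycleType_eq_replicate_two {r : ℕ} (hr : 2 * r ≤ Fintype.card X) :
    #(univ.filter fun g : Perm X => g.cycleType = Multiset.replicate r 2) =
      (Fintype.card X).choose (2 * r) * (2 * r - 1)‼ := by
  have key := card_of_cycleType_mul_eq X (Multiset.replicate r 2)
  have hprod : ∏ n ∈ (Multiset.replicate r 2).toFinset,
      (Multiset.count n (Multiset.replicate r 2))! = r ! := by
    rcases Nat.eq_zero_or_pos r with rfl | hr0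
    · simp
    · simp [Multiset.toFinset_replicate, hr0.ne']
  have hfact : (2 * r)! = 2 ^ r * r ! * (2 * r - 1)‼ := by
    rcases r with _ | r
    · simp
    · rw [← Nat.doubleFactorial_two_mul, show 2 * (r + 1) = 2 * r + 1 + 1 by ring,
        Nat.factorial_eq_mul_doubleFactorial]
      rfl
  simp only [Multiset.sum_replicate, smul_eq_mul, Multiset.prod_replicate, hprod] at key
  rw [if_pos ⟨by omega, fun a ha => (Multiset.eq_of_mem_replicate ha).ge⟩] at key
  refine Nat.eq_of_mul_eq_mul_right (by positivity : 0 < (Fintype.card X - r * 2)! * 2 ^ r * r !) ?_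
  rw [key, ← Nat.choose_mul_factorial_mul_factorial hr, mul_comm r 2, hfact]
  ring

lemma sum_pow_card_cycleType_of_mul_self_eq_one (k : ℕ) :
    ∑ g ∈ univ.filter (fun g : Perm X => g * g = 1), k ^ Multiset.card g.cycleType =
      ∑ r ∈ range (Fintype.card X / 2 + 1),
        (Fintype.card X).choose (2 * r) * k ^ r * (2 * r - 1)‼ := by
  have hmaps : ∀ g ∈ univ.filter (fun g : Perm X => g * g = 1),
      Multiset.card g.cycleType ∈ range (Fintype.card X / 2 + 1) := fun g hg => by
    have := card_support_eq_two_mul_card_cycleType (mem_filter.1 hg).2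
    have := card_le_univ g.support
    rw [mem_range]
    omega
  rw [← sum_fiberwise_of_maps_to hmaps]
  refine sum_congr rfl fun r hr => ?_
  have hfiber : ((univ.filter fun g : Perm X => g * g = 1).filter
      fun g => Multiset.card g.cycleType = r) =
        univ.filter fun g => g.cycleType = .replicate r 2 := by
    ext g
    simp only [mem_filter, mem_univ, true_and, mul_self_eq_one_iff_forall_mem_cycleType,
      Multiset.eq_replicate]
    exact and_comm
  rw [sum_congr rfl fun g hg => by rw [(mem_filter.1 hg).2], sum_const, smul_eq_mul, hfiber,
    card_filter_cycleType_eq_replicate_two (by rw [mem_range] at hr; omega)]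
  ring

end Equiv.Perm

lemma ZMod.add_self_eq_zero_and_ne_zero_iff {k : ℕ} [NeZero k] (hk : Even k) (x : ZMod k) :
    x + x = 0 ∧ x ≠ 0 ↔ x = ((k / 2 : ℕ) : ZMod k) := by
  obtain ⟨j, rfl⟩ := hk
  have hj : j ≠ 0 := fun h => NeZero.ne (j + j) (by omega)
  rw [show (j + j) / 2 = j by omega, ← neg_eq_iff_add_eq_zero, ZMod.neg_eq_self_iff]
  constructor
  · rintro ⟨h | h, hx⟩
    · exact absurd h hx
    · rw [← ZMod.natCast_zmod_val x]
      congr 1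
      omega
  · rintro rfl
    rw [ZMod.val_natCast_of_lt (by omega), Ne, ZMod.natCast_eq_zero_iff]
    exact ⟨Or.inr (by omega), fun h => absurd (Nat.le_of_dvd (by omega) h) (by omega)⟩

namespace CommMatchings

section Twist

variable {A β : Type*} [AddCommGroup A]

def twist (g : Perm β) (f : β → A) : Perm (A × β) where
  toFun p := (p.1 + f p.2, g p.2)
  invFun p := (p.1 - f (g.symm p.2), g.symm p.2)
  left_inv p := by simp
  right_inv p := by simp

@[simp] lemma twist_apply (g : Perm β) (f : β → A) (p : A × β) :
    twist g f p = (p.1 + f p.2, g p.2) := rfl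

lemma twist_mul (g g' : Perm β) (f f' : β → A) :
    twist g f * twist g' f' = twist (g * g') (f' + f ∘ g') := by
  ext p <;> simp [add_assoc]

lemma twist_one_zero : twist (1 : Perm β) (0 : β → A) = 1 := by
  ext p <;> simp

lemma twist_inj {g g' : Perm β} {f f' : β → A} :
    twist g f = twist g' f' ↔ g = g' ∧ f = f' := by
  refine ⟨fun h => ?_, fun ⟨hg, hf⟩ => hg ▸ hf ▸ rfl⟩
  have key : ∀ c, (f c, g c) = (f' c, g' c) := fun c => by
    simpa using congrArg (· (0, c)) h
  exact ⟨Equiv.ext fun c => congrArg Prod.snd (key c),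
    funext fun c => congrArg Prod.fst (key c)⟩

lemma twist_mul_self_eq_one_iff {g : Perm β} {f : β → A} :
    twist g f * twist g f = 1 ↔ g * g = 1 ∧ f + f ∘ g = 0 := by
  rw [twist_mul, ← twist_one_zero, twist_inj, add_comm]

lemma forall_twist_apply_ne_iff {g : Perm β} {f : β → A} :
    (∀ p, twist g f p ≠ p) ↔ ∀ c, g c = c → f c ≠ 0 := by
  simp [Prod.ext_iff, imp_not_comm]

lemma twist_one_pow (f : β → A) (n : ℕ) : twist (1 : Perm β) f ^ n = twist 1 (n • f) := by
  induction n with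
  | zero => rw [pow_zero, zero_nsmul, twist_one_zero]
  | succ n ih => rw [pow_succ, ih, twist_mul, succ_nsmul']; rfl

lemma commute_twist_one_const (g : Perm β) (f : β → A) (a : A) :
    Commute (twist g f) (twist 1 fun _ => a) := by
  simp only [Commute, SemiconjBy, twist_mul, mul_one, one_mul, twist_inj, true_and]
  exact add_comm _ _

end Twist

section Rotate

variable {k : ℕ} {β : Type*}

def rotate (k : ℕ) (β : Type*) : Perm (ZMod k × β) := twist 1 fun _ => 1

lemma rotate_pow_apply (n : ℕ) (p : ZMod k × β) : (rotate k β ^ n) p = (p.1 + n, p.2) := by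
  simp [rotate, twist_one_pow]

lemma minimalPeriod_rotate (p : ZMod k × β) : minimalPeriod (rotate k β) p = k := by
  refine Nat.dvd_right_iff_eq.1 fun n => ?_
  rw [← isPeriodicPt_iff_minimalPeriod_dvd, IsPeriodicPt, IsFixedPt, ← Perm.coe_pow,
    rotate_pow_apply, ← ZMod.natCast_eq_zero_iff]
  simp [Prod.ext_iff]

lemma exists_permCongr_eq_rotate {X : Type*} [Fintype X] [DecidableEq X] {k m : ℕ} (hk : 2 ≤ k)
    (α : Perm X) (hcard : Fintype.card X = k * m) (hα : ∀ x, minimalPeriod α x = k) :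
    ∃ E : X ≃ ZMod k × Fin m, E.permCongr α = rotate k (Fin m) := by
  have : NeZero k := ⟨by omega⟩
  let e₀ : X ≃ ZMod k × Fin m := Fintype.equivOfCardEq (by simp [hcard])
  obtain ⟨σ, hσ⟩ := isConj_iff.1 <| Perm.isConj_of_forall_minimalPeriod_eq hk
    (fun y => (e₀.minimalPeriod_permCongr α y).trans (hα _)) minimalPeriod_rotate
  refine ⟨e₀.trans σ, ?_⟩
  rw [← hσ]
  ext y <;> simp

lemma commute_rotate_iff [NeZero k] {ι : Perm (ZMod k × β)} :
    Commute ι (rotate k β) ↔ ∃ g f, twist g f = ι := by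
  refine ⟨fun h => ?_, fun ⟨g, f, hι⟩ => hι ▸ commute_twist_one_const g f 1⟩
  set F : β → ZMod k := fun c => (ι (0, c)).1
  set G : β → β := fun c => (ι (0, c)).2
  -- `ι` is determined by its values on `{0} × β` because it commutes with the translations
  have hι : ∀ i c, ι (i, c) = (i + F c, G c) := by
    intro i c
    obtain ⟨n, rfl⟩ := ZMod.natCast_zmod_surjective i
    have := congrArg (· (0, c)) (h.pow_right n).eq
    simpa [rotate_pow_apply, add_comm] using this
  have hG : Bijective G := by
    refine ⟨fun c c' hcc' => ?_, fun c' => ?_⟩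
    · have hzero : ∀ c, ι (-F c, c) = (0, G c) := fun c => by rw [hι, neg_add_cancel]
      have := ι.injective ((hzero c).trans (hcc' ▸ (hzero c').symm))
      exact congrArg Prod.snd this
    · obtain ⟨⟨i, c⟩, hic⟩ := ι.surjective (0, c')
      exact ⟨c, congrArg Prod.snd ((hι i c).symm.trans hic)⟩
  exact ⟨Equiv.ofBijective G hG, F, Equiv.ext fun ⟨i, c⟩ => (hι i c).symm⟩

end Rotate

section Count

variable {X Y : Type*} [Fintype X] [DecidableEq X] [Fintype Y] [DecidableEq Y]

def fixedPointFreeInvolutionsCommutingWith (σ : Perm X) : Finset (Perm X) :=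
  univ.filter fun ι => ι * ι = 1 ∧ (∀ x, ι x ≠ x) ∧ ι * σ = σ * ι

lemma card_fixedPointFreeInvolutionsCommutingWith_permCongr (e : X ≃ Y) (σ : Perm X) :
    #(fixedPointFreeInvolutionsCommutingWith (e.permCongr σ)) =
      #(fixedPointFreeInvolutionsCommutingWith σ) := by
  refine (card_equiv e.permCongr fun ι => ?_).symm
  have hone : e.permCongr (1 : Perm X) = 1 := e.permCongrHom.map_one
  simp only [fixedPointFreeInvolutionsCommutingWith, mem_filter, mem_univ, true_and,
    ← permCongr_mul, ← hone, e.permCongr.injective.eq_iff, permCongr_apply, ne_eq,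
    ← e.eq_symm_apply]
  rw [e.symm.forall_congr_right (q := fun x => ¬ι x = x)]

variable {k : ℕ} {β : Type*} [Fintype β] [DecidableEq β] [NeZero k]

def oddLabellings (k : ℕ) [NeZero k] (g : Perm β) : Finset (β → ZMod k) :=
  univ.filter fun f => f + f ∘ g = 0 ∧ ∀ c, g c = c → f c ≠ 0

lemma card_oddLabellings [LinearOrder β] (hk : Even k) {g : Perm β} (hg : g * g = 1) :
    #(oddLabellings k g) = k ^ #(univ.filter fun c => c < g c) := by
  have hgg : ∀ c, g (g c) = c := fun c => congrArg (· c) hg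
  have hlt : ∀ c, ¬ c < g c → g c ≠ c → g c < g (g c) := fun c h h' => by
    rw [hgg]; exact lt_of_le_of_ne (not_lt.1 h) h'
  have hodd : ∀ f : β → ZMod k, f + f ∘ g = 0 ↔ ∀ c, f (g c) = -f c := fun f => by
    simp only [funext_iff, Pi.add_apply, comp_apply, Pi.zero_apply, eq_neg_iff_add_eq_zero,
      add_comm]
  set half : ZMod k := ((k / 2 : ℕ) : ZMod k)
  have hhalf : half + half = 0 ∧ half ≠ 0 :=
    (ZMod.add_self_eq_zero_and_ne_zero_iff hk half).2 rfl
  -- an odd labelling is free on `{c | c < g c}`, equal to `k / 2` at the fixed points of `g`,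
  -- and determined by `f (g c) = -f c` elsewhere
  let e : {f // f ∈ oddLabellings k g} ≃ ({c // c < g c} → ZMod k) :=
    { toFun f c := f.1 c.1
      invFun h := ⟨fun c => if hc : c < g c then h ⟨c, hc⟩
          else if hfix : g c = c then half else -h ⟨g c, hlt c hc hfix⟩, by
        rw [oddLabellings, mem_filter_univ, hodd]
        refine ⟨fun c => ?_, fun c hc => ?_⟩
        · rcases lt_trichotomy c (g c) with h | h | h
          · simp [h, hgg, h.ne, not_lt.2 h.le]
          · simpa [h.symm] using eq_neg_iff_add_eq_zero.2 hhalf.1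
          · simp [h, hgg, h.ne, not_lt.2 h.le]
        · simp [hc, hhalf.2]⟩
      left_inv f := by
        obtain ⟨f, hf⟩ := f
        rw [oddLabellings, mem_filter_univ, hodd] at hf
        refine Subtype.ext (funext fun c => ?_)
        rcases lt_trichotomy c (g c) with h | h | h
        · simp [h]
        · have hc : f c + f c = 0 ∧ f c ≠ 0 :=
            ⟨by simpa [← h] using eq_neg_iff_add_eq_zero.1 (hf.1 c), hf.2 c h.symm⟩
          simp [h.symm, half, (ZMod.add_self_eq_zero_and_ne_zero_iff hk _).1 hc]
        · simp [not_lt.2 h.le, h.ne, hf.1]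
      right_inv h := funext fun c => dif_pos c.2 }
  rw [← Fintype.card_coe, Fintype.card_congr e, Fintype.card_fun, ZMod.card, Fintype.card_subtype]

lemma twist_mem_fixedPointFreeInvolutionsCommutingWith_rotate {g : Perm β} {f : β → ZMod k} :
    twist g f ∈ fixedPointFreeInvolutionsCommutingWith (rotate k β) ↔
      g * g = 1 ∧ f ∈ oddLabellings k g := by
  rw [fixedPointFreeInvolutionsCommutingWith, mem_filter_univ, oddLabellings, mem_filter_univ]
  simp only [twist_mul_self_eq_one_iff, forall_twist_apply_ne_iff, rotate,
    (commute_twist_one_const g f 1).eq, and_true, and_assoc]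

lemma card_fixedPointFreeInvolutionsCommutingWith_rotate :
    #(fixedPointFreeInvolutionsCommutingWith (rotate k β)) =
      ∑ g ∈ univ.filter fun g : Perm β => g * g = 1, #(oddLabellings k g) := by
  rw [← card_sigma]
  symm
  refine card_nbij (fun p => twist p.1 p.2) (fun p hp => ?_) (fun p _ q _ h => ?_)
    (fun ι hι => ?_)
  · simp only [mem_coe, mem_sigma, mem_filter_univ] at hp
    exact twist_mem_fixedPointFreeInvolutionsCommutingWith_rotate.2 hp
  · obtain ⟨hg, hf⟩ := twist_inj.1 h
    exact Sigma.ext hg (heq_of_eq hf)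
  · have hcomm : Commute ι (rotate k β) := (mem_filter.1 hι).2.2.2
    obtain ⟨g, f, rfl⟩ := commute_rotate_iff.1 hcomm
    refine ⟨⟨g, f⟩, ?_, rfl⟩
    simpa using twist_mem_fixedPointFreeInvolutionsCommutingWith_rotate.1 hι

end Count

lemma card_fixedPointFreeInvolutionsCommutingWith_eq_sum {X : Type*} [Fintype X]
    [DecidableEq X] {k m : ℕ} [NeZero k] (hk : Even k) (α : Perm X)
    (hcard : Fintype.card X = k * m) (hα : ∀ x, minimalPeriod α x = k) :
    #(fixedPointFreeInvolutionsCommutingWith α) =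
      ∑ g ∈ univ.filter fun g : Perm (Fin m) => g * g = 1, k ^ Multiset.card g.cycleType := by
  have hk2 : 2 ≤ k := by
    obtain ⟨j, rfl⟩ := hk
    have := NeZero.ne (j + j)
    omega
  obtain ⟨E, hE⟩ := exists_permCongr_eq_rotate hk2 α hcard hα
  rw [← card_fixedPointFreeInvolutionsCommutingWith_permCongr E, hE,
    card_fixedPointFreeInvolutionsCommutingWith_rotate]
  refine sum_congr rfl fun g hg => ?_
  rw [card_oddLabellings hk (mem_filter.1 hg).2,
    Perm.card_filter_lt_apply_eq_card_cycleType (mem_filter.1 hg).2]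

end CommMatchings

open scoped Classical Nat in
/-- For even positive `k`, the number of fixed-point free involutions commuting with a
permutation of cycle type `[k^m]` (every point has minimal period `k`, on a set of size
`k·m`) equals `Σ_{r=0}^{⌊m/2⌋} C(m,2r) k^r (2r-1)!!`. -/
theorem comm_matchings_even_cycles {X : Type*} [Fintype X] [DecidableEq X]
    (k m : ℕ) (hk : Even k) (hkpos : 0 < k) (α : Equiv.Perm X)
    (hcard : Fintype.card X = k * m)
    (hα : ∀ x : X, Function.minimalPeriod (⇑α) x = k) :
    (Finset.univ.filter fun ι : Equiv.Perm X =>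
        ι * ι = 1 ∧ (∀ x, ι x ≠ x) ∧ ι * α = α * ι).card =
      ∑ r ∈ Finset.range (m / 2 + 1), m.choose (2 * r) * k ^ r * (2 * r - 1)‼ := by
  have : NeZero k := ⟨hkpos.ne'⟩
  refine (CommMatchings.card_fixedPointFreeInvolutionsCommutingWith_eq_sum hk α hcard hα).trans ?_
  rw [Perm.sum_pow_card_cycleType_of_mul_self_eq_one, Fintype.card_fin]
end

section
/- For all real x, y ≥ 0, (Γ(x+1/2)/√π)·(Γ(y+1/2)/√π) ≤ Γ(x+y+1/2)/√π. -/
open Real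

lemma gamma_shift_aux (x y : ℝ) (hx : 0 < x) (hy : 0 < y) :
    Real.Gamma (x + 1 / 2) * Real.Gamma (y + 1 / 2) ≤
      Real.Gamma (x + y + 1 / 2) * Real.Gamma (1 / 2) := by
  have hxy : 0 < x + y := by linarith
  set a : ℝ := y / (x + y) with ha_def
  set b : ℝ := x / (x + y) with hb_def
  have ha : 0 < a := div_pos hy hxy
  have hb : 0 < b := div_pos hx hxy
  have hab : a + b = 1 := by rw [ha_def, hb_def]; field_simp; ring
  have hs : (0:ℝ) < 1 / 2 := by norm_num
  have ht : (0:ℝ) < x + y + 1 / 2 := by linarith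
  have hbx : b * (x + y) = x := by rw [hb_def]; field_simp
  have hay : a * (x + y) = y := by rw [ha_def]; field_simp
  have h1 : a * (1/2) + b * (x + y + 1/2) = x + 1/2 := by linear_combination (1/2) * hab + hbx
  have h2 : b * (1/2) + a * (x + y + 1/2) = y + 1/2 := by linear_combination (1/2) * hab + hay
  have A := Real.Gamma_mul_add_mul_le_rpow_Gamma_mul_rpow_Gamma hs ht ha hb hab
  have B := Real.Gamma_mul_add_mul_le_rpow_Gamma_mul_rpow_Gamma hs ht hb ha (by linarith)
  rw [h1] at A
  rw [h2] at B
  have hG1 : 0 < Real.Gamma (1/2) := Real.Gamma_pos_of_pos hs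
  have hGt : 0 < Real.Gamma (x + y + 1/2) := Real.Gamma_pos_of_pos ht
  calc Real.Gamma (x + 1/2) * Real.Gamma (y + 1/2)
      ≤ (Real.Gamma (1/2) ^ a * Real.Gamma (x+y+1/2) ^ b) *
        (Real.Gamma (1/2) ^ b * Real.Gamma (x+y+1/2) ^ a) := by
        apply mul_le_mul A B (Real.Gamma_pos_of_pos (by linarith)).le
        positivity
    _ = Real.Gamma (x + y + 1/2) * Real.Gamma (1/2) := by
        rw [show (Real.Gamma (1/2) ^ a * Real.Gamma (x+y+1/2) ^ b) *
            (Real.Gamma (1/2) ^ b * Real.Gamma (x+y+1/2) ^ a)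
            = (Real.Gamma (x+y+1/2) ^ a * Real.Gamma (x+y+1/2) ^ b) *
              (Real.Gamma (1/2) ^ a * Real.Gamma (1/2) ^ b) by ring,
          ← Real.rpow_add hGt, ← Real.rpow_add hG1, hab, Real.rpow_one, Real.rpow_one]

/-- For all real `x, y ≥ 0`, `(Γ(x+1/2)/√π)·(Γ(y+1/2)/√π) ≤ Γ(x+y+1/2)/√π`. -/
theorem gamma_merge_inequality (x y : ℝ) (hx : 0 ≤ x) (hy : 0 ≤ y) :
    (Real.Gamma (x + 1 / 2) / Real.sqrt Real.pi) *
        (Real.Gamma (y + 1 / 2) / Real.sqrt Real.pi) ≤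
      Real.Gamma (x + y + 1 / 2) / Real.sqrt Real.pi := by
  have hpi : (0:ℝ) < Real.sqrt Real.pi := Real.sqrt_pos.mpr Real.pi_pos
  rcases eq_or_lt_of_le hx with rfl | hx'
  · rw [zero_add, zero_add, ← Real.Gamma_one_half_eq,
      div_self (Real.Gamma_pos_of_pos (by norm_num : (0:ℝ) < 1/2)).ne', one_mul]
  rcases eq_or_lt_of_le hy with rfl | hy'
  · rw [add_zero, zero_add, ← Real.Gamma_one_half_eq,
      div_self (Real.Gamma_pos_of_pos (by norm_num : (0:ℝ) < 1/2)).ne', mul_one]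
  have key := gamma_shift_aux x y hx' hy'
  rw [Real.Gamma_one_half_eq] at key
  rw [div_mul_div_comm, div_le_div_iff₀ (by positivity) hpi]
  calc Real.Gamma (x + 1/2) * Real.Gamma (y + 1/2) * Real.sqrt Real.pi
      ≤ (Real.Gamma (x + y + 1/2) * Real.sqrt Real.pi) * Real.sqrt Real.pi := by
        exact mul_le_mul_of_nonneg_right key hpi.le
    _ = Real.Gamma (x + y + 1/2) * (Real.sqrt Real.pi * Real.sqrt Real.pi) := by ring
end

section
/- There exists a constant C > 0 such that for all real x, y ≥ 0, Γ(x+y+1/2) ≤ C^{1+x+y} Γ(x+1/2) Γ(y+1/2). -/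
open Real

private lemma rpow_half_sq {x : ℝ} (hx : 0 ≤ x) : (x ^ ((1:ℝ)/2)) ^ 2 = x := by
  rw [← Real.rpow_natCast (x ^ ((1:ℝ)/2)) 2, ← Real.rpow_mul hx]
  norm_num

/-- midpoint log-convexity in squared form -/
private lemma sq_Gamma_mid {s t : ℝ} (hs : 0 < s) (ht : 0 < t) :
    Real.Gamma ((s + t) / 2) ^ 2 ≤ Real.Gamma s * Real.Gamma t := by
  have h := Real.Gamma_mul_add_mul_le_rpow_Gamma_mul_rpow_Gamma hs ht
    (by norm_num : (0:ℝ) < 1/2) (by norm_num : (0:ℝ) < 1/2) (by norm_num)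
  have hmid : (1:ℝ)/2 * s + 1/2 * t = (s + t) / 2 := by ring
  rw [hmid] at h
  have h0 : 0 ≤ Real.Gamma ((s + t) / 2) := (Real.Gamma_pos_of_pos (by linarith)).le
  calc Real.Gamma ((s + t) / 2) ^ 2
      ≤ (Real.Gamma s ^ ((1:ℝ)/2) * Real.Gamma t ^ ((1:ℝ)/2)) ^ 2 := by
        apply pow_le_pow_left₀ h0 h
    _ = Real.Gamma s * Real.Gamma t := by
        rw [mul_pow, rpow_half_sq (Real.Gamma_pos_of_pos hs).le,
          rpow_half_sq (Real.Gamma_pos_of_pos ht).le]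

private lemma Gamma_two' : Real.Gamma 2 = 1 := by
  rw [show (2:ℝ) = 1 + 1 by norm_num, Real.Gamma_add_one one_ne_zero, Real.Gamma_one, mul_one]

private lemma Gamma_three' : Real.Gamma 3 = 2 := by
  rw [show (3:ℝ) = 2 + 1 by norm_num, Real.Gamma_add_one two_ne_zero, Gamma_two', mul_one]

/-- lower bound `Γ(t) ≥ 1/2` for `t ≥ 1` -/
private lemma Gamma_ge_half {t : ℝ} (ht : 1 ≤ t) : (1:ℝ)/2 ≤ Real.Gamma t := by
  rcases le_or_gt 2 t with h2 | h2
  · have : Real.Gamma 2 ≤ Real.Gamma t :=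
      Real.Gamma_strictMonoOn_Ici.monotoneOn (by simp) (by simpa using h2) h2
    rw [Gamma_two'] at this; linarith
  · -- 1 ≤ t < 2 : use 1 = Γ(2)² ≤ Γ(t) Γ(4-t) and Γ(4-t) ≤ Γ(3) = 2
    have h1 : Real.Gamma 2 ^ 2 ≤ Real.Gamma t * Real.Gamma (4 - t) := by
      have := sq_Gamma_mid (show (0:ℝ) < t by linarith) (show (0:ℝ) < 4 - t by linarith)
      rwa [show (t + (4 - t)) / 2 = 2 by ring] at this
    rw [Gamma_two', one_pow] at h1
    have h4 : Real.Gamma (4 - t) ≤ 2 := by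
      have : Real.Gamma (4 - t) ≤ Real.Gamma 3 :=
        Real.Gamma_strictMonoOn_Ici.monotoneOn (by simp; linarith) (by norm_num)
          (by linarith)
      rwa [Gamma_three'] at this
    have hp : 0 < Real.Gamma t := Real.Gamma_pos_of_pos (by linarith)
    nlinarith

/-- `Γ(z+1/2) ≤ 4 Γ(z+1)` for `z ≥ 0` -/
private lemma Gamma_add_half_le {z : ℝ} (hz : 0 ≤ z) :
    Real.Gamma (z + 1/2) ≤ 4 * Real.Gamma (z + 1) := by
  rcases eq_or_lt_of_le hz with rfl | hz'
  · rw [zero_add, zero_add, Real.Gamma_one, Real.Gamma_one_half_eq]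
    nlinarith [Real.sq_sqrt Real.pi_pos.le, Real.sqrt_nonneg π, Real.pi_lt_d2]
  · set a : ℝ := 1 / (2 * z + 1) with ha
    have ha0 : 0 < a := by positivity
    have ha1 : a ≤ 1 := by rw [ha]; rw [div_le_one (by linarith)]; linarith
    have hb0 : 0 < 1 - a := by
      rw [ha]; rw [sub_pos, div_lt_one (by linarith)]; linarith
    have h := Real.Gamma_mul_add_mul_le_rpow_Gamma_mul_rpow_Gamma
      (show (0:ℝ) < 1/2 by norm_num) (show (0:ℝ) < z + 1 by linarith) ha0 hb0 (by ring)
    have hpt : a * (1/2) + (1 - a) * (z + 1) = z + 1/2 := by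
      rw [ha]; field_simp; ring
    rw [hpt, Real.Gamma_one_half_eq] at h
    have hsq : Real.sqrt π ≤ 2 := by
      nlinarith [Real.sq_sqrt Real.pi_pos.le, Real.sqrt_nonneg π, Real.pi_lt_d2]
    have h1 : Real.sqrt π ^ a ≤ 2 := by
      calc Real.sqrt π ^ a ≤ (2:ℝ) ^ a :=
            Real.rpow_le_rpow (Real.sqrt_nonneg π) hsq ha0.le
        _ ≤ (2:ℝ) ^ (1:ℝ) := Real.rpow_le_rpow_of_exponent_le one_le_two ha1
        _ = 2 := Real.rpow_one 2
    have hG : 0 < Real.Gamma (z + 1) := Real.Gamma_pos_of_pos (by linarith)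
    have h2 : Real.Gamma (z + 1) ^ (1 - a) ≤ 2 * Real.Gamma (z + 1) := by
      rcases le_or_gt (Real.Gamma (z + 1)) 1 with hle | hgt
      · have hhalf : (1:ℝ)/2 ≤ Real.Gamma (z + 1) := Gamma_ge_half (by linarith)
        calc Real.Gamma (z + 1) ^ (1 - a) ≤ Real.Gamma (z + 1) ^ (0:ℝ) :=
              Real.rpow_le_rpow_of_exponent_ge hG hle (by linarith)
          _ = 1 := Real.rpow_zero _
          _ ≤ 2 * Real.Gamma (z + 1) := by linarith
      · calc Real.Gamma (z + 1) ^ (1 - a) ≤ Real.Gamma (z + 1) ^ (1:ℝ) :=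
              Real.rpow_le_rpow_of_exponent_le hgt.le (by linarith)
          _ = Real.Gamma (z + 1) := Real.rpow_one _
          _ ≤ 2 * Real.Gamma (z + 1) := by linarith
    calc Real.Gamma (z + 1/2) ≤ Real.sqrt π ^ a * Real.Gamma (z + 1) ^ (1 - a) := h
      _ ≤ 2 * (2 * Real.Gamma (z + 1)) := by
          apply mul_le_mul h1 h2 (Real.rpow_nonneg hG.le _) (by norm_num)
      _ = 4 * Real.Gamma (z + 1) := by ring

/-- There is a constant `C > 0` such that for all real `x, y ≥ 0`,
`Γ(x+y+1/2) ≤ C^{1+x+y} Γ(x+1/2) Γ(y+1/2)`. -/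
theorem gamma_split_inequality :
    ∃ C : ℝ, 0 < C ∧ ∀ x y : ℝ, 0 ≤ x → 0 ≤ y →
      Real.Gamma (x + y + 1 / 2) ≤
        C ^ (1 + x + y) * Real.Gamma (x + 1 / 2) * Real.Gamma (y + 1 / 2) := by
  refine ⟨8, by norm_num, fun x y hx hy => ?_⟩
  set z : ℝ := x + y with hzdef
  have hz : 0 ≤ z := by positivity
  -- Step A : Γ((z+1)/2)² ≤ Γ(x+1/2) Γ(y+1/2)
  have stepA : Real.Gamma ((z + 1) / 2) ^ 2 ≤
      Real.Gamma (x + 1/2) * Real.Gamma (y + 1/2) := by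
    have := sq_Gamma_mid (show (0:ℝ) < x + 1/2 by linarith) (show (0:ℝ) < y + 1/2 by linarith)
    rwa [show ((x + 1/2) + (y + 1/2)) / 2 = (z + 1) / 2 by rw [hzdef]; ring] at this
  -- duplication formula at s = (z+1)/2
  have dup : Real.Gamma ((z+1)/2) * Real.Gamma (z/2 + 1) =
      Real.Gamma (z + 1) * (2:ℝ) ^ (-z) * Real.sqrt π := by
    have := Real.Gamma_mul_Gamma_add_half ((z+1)/2)
    rw [show (z+1)/2 + 1/2 = z/2 + 1 by ring, show 2 * ((z+1)/2) = z + 1 by ring,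
      show 1 - (z + 1) = -z by ring] at this
    exact this
  -- Γ(z/2+1)² ≤ Γ(z+1)
  have stepL3 : Real.Gamma (z/2 + 1) ^ 2 ≤ Real.Gamma (z + 1) := by
    have := sq_Gamma_mid (show (0:ℝ) < 1 by norm_num) (show (0:ℝ) < z + 1 by linarith)
    rwa [show ((1:ℝ) + (z + 1)) / 2 = z/2 + 1 by ring, Real.Gamma_one, one_mul] at this
  -- Γ(z+1) ≤ π⁻¹ 4^z Γ((z+1)/2)²
  have hGz1 : 0 < Real.Gamma (z + 1) := Real.Gamma_pos_of_pos (by linarith)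
  have hGm : 0 < Real.Gamma ((z+1)/2) := Real.Gamma_pos_of_pos (by linarith)
  have hGh : 0 < Real.Gamma (z/2 + 1) := Real.Gamma_pos_of_pos (by linarith)
  have hsqpi : Real.sqrt π ^ 2 = π := Real.sq_sqrt Real.pi_pos.le
  have h2z : (0:ℝ) < (2:ℝ) ^ (-z) := Real.rpow_pos_of_pos two_pos _
  have key : π * ((2:ℝ) ^ (-z)) ^ 2 * Real.Gamma (z + 1) ≤ Real.Gamma ((z+1)/2) ^ 2 := by
    have hsq : (Real.Gamma ((z+1)/2) * Real.Gamma (z/2 + 1)) ^ 2 =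
        Real.Gamma (z + 1) ^ 2 * ((2:ℝ) ^ (-z)) ^ 2 * π := by
      rw [dup]; rw [mul_pow, mul_pow, hsqpi]
    rw [mul_pow] at hsq
    nlinarith [sq_nonneg (Real.Gamma ((z+1)/2)), stepL3, hGz1, h2z, sq_nonneg ((2:ℝ) ^ (-z))]
  -- Step B : Γ(z+1/2) ≤ 8^{1+z} Γ((z+1)/2)²
  have stepB : Real.Gamma (z + 1/2) ≤ (8:ℝ) ^ (1 + z) * Real.Gamma ((z+1)/2) ^ 2 := by
    have hmain : Real.Gamma (z + 1/2) ≤ 4 * Real.Gamma (z + 1) := Gamma_add_half_le hz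
    have hkey2 : Real.Gamma (z + 1) ≤ π⁻¹ * ((2:ℝ) ^ (-z))⁻¹ ^ 2 * Real.Gamma ((z+1)/2) ^ 2 := by
      have hA : (0:ℝ) < π * ((2:ℝ) ^ (-z)) ^ 2 := by positivity
      have h1 : Real.Gamma (z + 1) ≤ Real.Gamma ((z+1)/2) ^ 2 / (π * ((2:ℝ) ^ (-z)) ^ 2) := by
        rw [le_div_iff₀ hA]; nlinarith [key]
      have heq : Real.Gamma ((z+1)/2) ^ 2 / (π * ((2:ℝ) ^ (-z)) ^ 2) =
          π⁻¹ * ((2:ℝ) ^ (-z))⁻¹ ^ 2 * Real.Gamma ((z+1)/2) ^ 2 := by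
        field_simp
      rw [heq] at h1; exact h1
    calc Real.Gamma (z + 1/2) ≤ 4 * Real.Gamma (z + 1) := hmain
      _ ≤ 4 * (π⁻¹ * ((2:ℝ) ^ (-z))⁻¹ ^ 2 * Real.Gamma ((z+1)/2) ^ 2) := by
          apply mul_le_mul_of_nonneg_left hkey2 (by norm_num)
      _ ≤ (8:ℝ) ^ (1 + z) * Real.Gamma ((z+1)/2) ^ 2 := by
          rw [show (4:ℝ) * (π⁻¹ * ((2:ℝ) ^ (-z))⁻¹ ^ 2 * Real.Gamma ((z+1)/2) ^ 2)
              = (4 * π⁻¹ * ((2:ℝ) ^ (-z))⁻¹ ^ 2) * Real.Gamma ((z+1)/2) ^ 2 by ring]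
          apply mul_le_mul_of_nonneg_right _ (sq_nonneg _)
          have hinv : ((2:ℝ) ^ (-z))⁻¹ ^ 2 = (4:ℝ) ^ z := by
            rw [Real.rpow_neg two_pos.le, inv_inv, sq, ← Real.rpow_add two_pos,
              show (4:ℝ) = 2 * 2 by norm_num, Real.mul_rpow two_pos.le two_pos.le,
              ← Real.rpow_add two_pos]
          rw [hinv]
          have hπ1 : (π:ℝ)⁻¹ ≤ 1 := by
            have h3 : (1:ℝ) ≤ π := by nlinarith [Real.pi_gt_three]
            have := inv_anti₀ one_pos h3
            simpa using this
          have h4z : (4:ℝ) ^ z ≤ (8:ℝ) ^ z :=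
            Real.rpow_le_rpow (by norm_num) (by norm_num) hz
          calc 4 * π⁻¹ * (4:ℝ) ^ z ≤ 4 * 1 * (8:ℝ) ^ z := by
                apply mul_le_mul _ h4z (by positivity) (by norm_num)
                nlinarith [Real.pi_pos.le]
            _ ≤ 8 * (8:ℝ) ^ z := by
                have : (0:ℝ) < (8:ℝ) ^ z := Real.rpow_pos_of_pos (by norm_num) z
                nlinarith
            _ = (8:ℝ) ^ (1 + z) := by
                rw [Real.rpow_add (by norm_num : (0:ℝ) < 8) 1 z, Real.rpow_one]
  calc Real.Gamma (x + y + 1/2) = Real.Gamma (z + 1/2) := by rw [hzdef]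
    _ ≤ (8:ℝ) ^ (1 + z) * Real.Gamma ((z+1)/2) ^ 2 := stepB
    _ ≤ (8:ℝ) ^ (1 + z) * (Real.Gamma (x + 1/2) * Real.Gamma (y + 1/2)) :=
        mul_le_mul_of_nonneg_left stepA (by positivity)
    _ = (8:ℝ) ^ (1 + x + y) * Real.Gamma (x + 1/2) * Real.Gamma (y + 1/2) := by
        rw [hzdef]; ring_nf
end

section
/- Define η_{2,m} = Σ_{r=0}^{⌊m/2⌋} C(m,2r) 2^r (2r-1)!!. Then the series Σ_{m=0}^∞ ((-1)^m / (2^m m!)) η_{2,m} converges absolutely to e^{-1/4}. -/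
/-!
Since `2 ^ r * r ! * (2r-1)‼ = (2r)!`, the `r`-th summand of `η_{2,m} / m!` is
`1 / ((m - 2r)! * r !)`, so `Σ_m x^m η_{2,m} / m!` is the double series
`Σ_{k,r} x^k / k! * (x²)^r / r!` regrouped along `m = k + 2r`. Absolute convergence of the
exponential series allows the regrouping, and gives `e^x * e^{x²} = e^{x + x²}`; take `x = -1/2`.
-/

open scoped Nat
open Finset

noncomputable def etaTwo (m : ℕ) : ℝ :=
  ∑ r ∈ range (m / 2 + 1), (m.choose (2 * r) : ℝ) * 2 ^ r * ((2 * r - 1)‼ : ℝ)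

lemma etaTwo_nonneg (m : ℕ) : 0 ≤ etaTwo m := by
  unfold etaTwo
  positivity

theorem Nat.doubleFactorial_two_mul_sub_one_mul (r : ℕ) :
    (2 * r - 1)‼ * (2 ^ r * r !) = (2 * r)! := by
  cases r with
  | zero => rfl
  | succ s =>
    rw [← Nat.doubleFactorial_two_mul, show 2 * (s + 1) = 2 * s + 1 + 1 by ring,
      Nat.factorial_eq_mul_doubleFactorial, Nat.add_sub_cancel, mul_comm]

theorem Real.hasSum_pow_div_factorial (x : ℝ) : HasSum (fun n ↦ x ^ n / n !) (Real.exp x) :=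
  Real.exp_eq_exp_ℝ ▸ NormedSpace.expSeries_div_hasSum_exp x

theorem Real.summable_norm_pow_div_factorial (x : ℝ) :
    Summable fun n ↦ ‖x ^ n / (n ! : ℝ)‖ := by
  simpa [abs_div] using Real.summable_pow_div_factorial |x|

lemma hasSum_pow_div_factorial_mul_pow_div_factorial (x y : ℝ) :
    HasSum (fun p : ℕ × ℕ ↦ x ^ p.1 / p.1 ! * (y ^ p.2 / p.2 !))
      (Real.exp x * Real.exp y) := by
  have hprod := summable_mul_of_summable_norm (Real.summable_norm_pow_div_factorial x)
    (Real.summable_norm_pow_div_factorial y)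
  exact (Real.hasSum_pow_div_factorial x).mul (Real.hasSum_pow_div_factorial y) hprod

lemma pow_div_factorial_mul_choose_two_mul (x : ℝ) (k r : ℕ) :
    x ^ (k + 2 * r) / (k + 2 * r)! *
        ((k + 2 * r).choose (2 * r) * 2 ^ r * (2 * r - 1)‼ : ℝ) =
      x ^ k / k ! * ((x ^ 2) ^ r / r !) := by
  have hfact : ((k + 2 * r).choose (2 * r) * (2 ^ r * (2 * r - 1)‼) * (k ! * r !) : ℝ) =
      (k + 2 * r)! := by
    rw [← Nat.add_choose_mul_factorial_mul_factorial, ← Nat.doubleFactorial_two_mul_sub_one_mul]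
    push_cast
    ring
  rw [div_mul_eq_mul_div, div_eq_iff (by positivity), ← hfact]
  field_simp
  ring

theorem hasSum_pow_div_factorial_mul_etaTwo (x : ℝ) :
    HasSum (fun m ↦ x ^ m / m ! * etaTwo m) (Real.exp (x + x ^ 2)) := by
  set g : ℕ × ℕ → ℝ := fun p ↦
    x ^ p.1 / p.1 ! * (p.1.choose (2 * p.2) * 2 ^ p.2 * (2 * p.2 - 1)‼ : ℝ)
  -- `g (m, r) = 0` for `m < 2 * r`, so `g` lives on the image of `(k, r) ↦ (k + 2 * r, r)`.
  have hg : HasSum g (Real.exp x * Real.exp (x ^ 2)) := by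
    have hinj : Function.Injective fun p : ℕ × ℕ ↦ (p.1 + 2 * p.2, p.2) := by
      rintro ⟨k, r⟩ ⟨k', r'⟩ h
      simp only [Prod.mk.injEq] at h ⊢
      omega
    refine (hinj.hasSum_iff ?_).mp ?_
    · rintro ⟨m, r⟩ hmr
      have hlt : m < 2 * r := by
        by_contra! hle
        exact hmr ⟨(m - 2 * r, r), Prod.ext (Nat.sub_add_cancel hle) rfl⟩
      simp [g, Nat.choose_eq_zero_of_lt hlt]
    · convert hasSum_pow_div_factorial_mul_pow_div_factorial x (x ^ 2) using 2 with p
      exact pow_div_factorial_mul_choose_two_mul x p.1 p.2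
  rw [Real.exp_add]
  refine hg.prod_fiberwise fun m ↦ ?_
  rw [etaTwo, mul_sum]
  refine hasSum_sum_of_ne_finset_zero fun r hr ↦ ?_
  have hlt : m < 2 * r := by
    rw [mem_range] at hr
    omega
  simp [g, Nat.choose_eq_zero_of_lt hlt]

open scoped Nat in
/-- With `η_{2,m} = Σ_{r=0}^{⌊m/2⌋} C(m,2r) 2^r (2r-1)!!`, the series
`Σ_{m≥0} ((-1)^m/(2^m m!)) η_{2,m}` converges absolutely to `e^{-1/4}`. -/
theorem eta_two_series_eq_exp_neg_quarter :
    (Summable fun m : ℕ => |((-1 : ℝ) ^ m / (2 ^ m * m.factorial)) *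
        ∑ r ∈ Finset.range (m / 2 + 1),
          (m.choose (2 * r) : ℝ) * 2 ^ r * ((2 * r - 1)‼ : ℝ)|) ∧
    (∑' m : ℕ, ((-1 : ℝ) ^ m / (2 ^ m * m.factorial)) *
        ∑ r ∈ Finset.range (m / 2 + 1),
          (m.choose (2 * r) : ℝ) * 2 ^ r * ((2 * r - 1)‼ : ℝ)) =
      Real.exp (-(1 / 4)) := by
  have hcoeff (m : ℕ) : (-1 : ℝ) ^ m / (2 ^ m * m !) = (-1 / 2) ^ m / m ! := by
    rw [div_pow, div_div]
  have habs (m : ℕ) : |(-1 / 2 : ℝ) ^ m / m ! * etaTwo m| = (1 / 2) ^ m / m ! * etaTwo m := by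
    rw [abs_mul, abs_div, abs_pow, abs_of_nonneg (etaTwo_nonneg m), Nat.abs_cast]
    norm_num
  simp only [hcoeff, ← etaTwo.eq_1, habs]
  refine ⟨(hasSum_pow_div_factorial_mul_etaTwo (1 / 2)).summable, ?_⟩
  rw [(hasSum_pow_div_factorial_mul_etaTwo (-1 / 2)).tsum_eq]
  norm_num
end

section
/- Define η^{odd}_{2,2s} = Σ_{r=0}^{s} (-1)^r C(2s,2r) 2^r (2r-1)!! and η^{odd}_{2,2s+1} = -Σ_{r=0}^{s} (-1)^r C(2s+1,2r) 2^r (2r-1)!!. Then Σ_{m=0}^∞ ((-1)^m/(2^m m!)) η^{odd}_{2,m} converges absolutely to e^{1/4}. -/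
open scoped Nat

noncomputable def fbAux (r : ℕ) : ℝ := (-(1/4) : ℝ) ^ r / r.factorial
noncomputable def ggAux (j : ℕ) : ℝ := ((1/2 : ℝ)) ^ j / j.factorial
noncomputable def bbAux (i : ℕ) : ℝ := if Even i then fbAux (i / 2) else 0

lemma fbAux_norm_summable : Summable fun r : ℕ => ‖fbAux r‖ := by
  have : (fun r : ℕ => ‖fbAux r‖) = fun r : ℕ => ((1/4 : ℝ)) ^ r / r.factorial := by
    funext r
    simp [fbAux, Real.norm_eq_abs, abs_div, abs_pow, abs_of_nonneg]
  rw [this]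
  exact Real.summable_pow_div_factorial (1/4)

lemma ggAux_norm_summable : Summable fun j : ℕ => ‖ggAux j‖ := by
  have : (fun j : ℕ => ‖ggAux j‖) = fun j : ℕ => ((1/2 : ℝ)) ^ j / j.factorial := by
    funext j
    simp [ggAux, Real.norm_eq_abs, abs_div, abs_pow, abs_of_nonneg]
  rw [this]
  exact Real.summable_pow_div_factorial (1/2)

lemma fbAux_tsum : ∑' r, fbAux r = Real.exp (-(1/4)) := by
  rw [Real.exp_eq_exp_ℝ, NormedSpace.exp_eq_tsum_div]
  rfl

lemma ggAux_tsum : ∑' j, ggAux j = Real.exp (1/2) := by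
  rw [Real.exp_eq_exp_ℝ, NormedSpace.exp_eq_tsum_div]
  rfl

lemma two_mul_injective : Function.Injective (fun r : ℕ => 2 * r) := fun a b h => by
  simp only [] at h; omega

lemma bbAux_comp (r : ℕ) : bbAux (2 * r) = fbAux r := by
  simp [bbAux, Nat.mul_div_cancel_left r (by norm_num : 0 < 2)]

lemma bbAux_support : ∀ x ∉ Set.range (fun r : ℕ => 2 * r), bbAux x = 0 := by
  intro x hx
  have : ¬ Even x := by
    intro ⟨k, hk⟩
    exact hx ⟨k, by simp only []; omega⟩
  simp [bbAux, this]

lemma bbAux_norm_summable : Summable fun i : ℕ => ‖bbAux i‖ := by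
  rw [← Function.Injective.summable_iff two_mul_injective
    (fun x hx => by rw [bbAux_support x hx, norm_zero])]
  have : ((fun i : ℕ => ‖bbAux i‖) ∘ fun r : ℕ => 2 * r) = fun r : ℕ => ‖fbAux r‖ := by
    funext r; simp [Function.comp, bbAux_comp]
  rw [this]
  exact fbAux_norm_summable

lemma bbAux_tsum : ∑' i, bbAux i = Real.exp (-(1/4)) := by
  rw [← Function.Injective.tsum_eq two_mul_injective
    (Function.support_subset_iff'.2 bbAux_support)]
  rw [← fbAux_tsum]
  exact tsum_congr fun r => bbAux_comp r

lemma factorial_two_mul_eq (r : ℕ) : (2 * r).factorial = 2 ^ r * r.factorial * (2 * r - 1)‼ := by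
  cases r with
  | zero => rfl
  | succ n =>
    have h1 : 2 * (n + 1) = (2 * n + 1) + 1 := by ring
    rw [h1, Nat.factorial_eq_mul_doubleFactorial]
    have h2 : 2 * n + 1 + 1 = 2 * (n + 1) := by ring
    rw [h2, Nat.doubleFactorial_two_mul]
    have h3 : 2 * (n + 1) - 1 = 2 * n + 1 := by omega
    rw [h3]

lemma pointwise_eq (m r : ℕ) (h2r : 2 * r ≤ m) :
    bbAux (2 * r) * ggAux (m - 2 * r) =
      (1 / ((2:ℝ) ^ m * m.factorial)) *
        ((-1 : ℝ) ^ r * (m.choose (2 * r) : ℝ) * 2 ^ r * ((2 * r - 1)‼ : ℝ)) := by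
  rw [bbAux_comp]
  have hm : (m.factorial : ℝ) =
      (m.choose (2 * r) : ℝ) * 2 ^ r * (r.factorial : ℝ) * ((2 * r - 1)‼ : ℝ)
        * ((m - 2 * r).factorial : ℝ) := by
    have := Nat.choose_mul_factorial_mul_factorial h2r
    have h := factorial_two_mul_eq r
    push_cast [← this, h]
    ring
  have h4 : ((4:ℝ)) ^ r * 2 ^ (m - 2 * r) = 2 ^ m := by
    rw [show (4:ℝ) = 2 ^ 2 by norm_num, ← pow_mul, ← pow_add]
    congr 1; omega
  have hC : (m.choose (2 * r) : ℝ) ≠ 0 := by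
    exact_mod_cast (Nat.choose_pos h2r).ne'
  have hD : (((2 * r - 1)‼ : ℕ) : ℝ) ≠ 0 := by
    exact_mod_cast (Nat.doubleFactorial_pos _).ne'
  have hrf : (r.factorial : ℝ) ≠ 0 := Nat.cast_ne_zero.2 r.factorial_ne_zero
  have hmrf : ((m - 2 * r).factorial : ℝ) ≠ 0 := Nat.cast_ne_zero.2 (m - 2 * r).factorial_ne_zero
  simp only [fbAux, ggAux, show (-(1/4) : ℝ) = (-1) / 4 by norm_num,
    show ((1:ℝ)/2) = 1 / 2 from rfl, div_pow, one_pow]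
  rw [hm, ← h4]
  field_simp

lemma sum_even_reindex (m : ℕ) (h : ℕ → ℝ) (hodd : ∀ k, ¬ Even k → h k = 0) :
    ∑ k ∈ Finset.range (m + 1), h k = ∑ r ∈ Finset.range (m / 2 + 1), h (2 * r) := by
  rw [← Finset.sum_filter_of_ne (p := fun k => Even k)
    (fun x _ hx => by by_contra hc; exact hx (hodd x hc))]
  refine Finset.sum_bij' (fun k _ => k / 2) (fun r _ => 2 * r) ?_ ?_ ?_ ?_ ?_
  · intro a ha
    simp only [Finset.mem_filter, Finset.mem_range] at ha ⊢
    omega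
  · intro a ha
    simp only [Finset.mem_filter, Finset.mem_range] at ha ⊢
    constructor
    · omega
    · exact ⟨a, by omega⟩
  · intro a ha
    simp only [Finset.mem_filter, Finset.mem_range] at ha
    obtain ⟨-, k, hk⟩ := ha
    omega
  · intro a ha
    omega
  · intro a ha
    simp only [Finset.mem_filter, Finset.mem_range] at ha
    obtain ⟨-, k, hk⟩ := ha
    congr 1
    omega

lemma term_eq (m : ℕ) :
    ((-1 : ℝ) ^ m / (2 ^ m * m.factorial)) *
        ((if Even m then (1 : ℝ) else -1) *
          ∑ r ∈ Finset.range (m / 2 + 1),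
            (-1 : ℝ) ^ r * (m.choose (2 * r) : ℝ) * 2 ^ r * ((2 * r - 1)‼ : ℝ)) =
      ∑ k ∈ Finset.range (m + 1), bbAux k * ggAux (m - k) := by
  have hsign : ((-1 : ℝ) ^ m) * (if Even m then (1 : ℝ) else -1) = 1 := by
    rcases Nat.even_or_odd m with h | h
    · simp [h, h.neg_one_pow]
    · simp [Nat.not_even_iff_odd.2 h, h.neg_one_pow]
  rw [sum_even_reindex m (fun k => bbAux k * ggAux (m - k))
    (fun k hk => by simp [bbAux, hk])]
  have : ∀ r ∈ Finset.range (m / 2 + 1),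
      bbAux (2 * r) * ggAux (m - 2 * r) =
      (1 / ((2:ℝ) ^ m * m.factorial)) *
        ((-1 : ℝ) ^ r * (m.choose (2 * r) : ℝ) * 2 ^ r * ((2 * r - 1)‼ : ℝ)) := by
    intro r hr
    exact pointwise_eq m r (by simp only [Finset.mem_range] at hr; omega)
  rw [Finset.sum_congr rfl this, ← Finset.mul_sum]
  rw [show ((-1 : ℝ) ^ m / (2 ^ m * m.factorial)) *
        ((if Even m then (1 : ℝ) else -1) * _) =
      (((-1 : ℝ) ^ m) * (if Even m then (1 : ℝ) else -1)) * ((1 / ((2:ℝ) ^ m * m.factorial)) *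
        ∑ r ∈ Finset.range (m / 2 + 1),
            (-1 : ℝ) ^ r * (m.choose (2 * r) : ℝ) * 2 ^ r * ((2 * r - 1)‼ : ℝ)) by ring]
  rw [hsign, one_mul]

open scoped Nat in
/-- With `η^{odd}_{2,2s} = Σ_{r=0}^{s} (-1)^r C(2s,2r) 2^r (2r-1)!!` and
`η^{odd}_{2,2s+1} = -Σ_{r=0}^{s} (-1)^r C(2s+1,2r) 2^r (2r-1)!!`, the series
`Σ_{m≥0} ((-1)^m/(2^m m!)) η^{odd}_{2,m}` converges absolutely to `e^{1/4}`. -/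
theorem eta_odd_two_series_eq_exp_quarter :
    (Summable fun m : ℕ => |((-1 : ℝ) ^ m / (2 ^ m * m.factorial)) *
        ((if Even m then (1 : ℝ) else -1) *
          ∑ r ∈ Finset.range (m / 2 + 1),
            (-1 : ℝ) ^ r * (m.choose (2 * r) : ℝ) * 2 ^ r * ((2 * r - 1)‼ : ℝ))|) ∧
    (∑' m : ℕ, ((-1 : ℝ) ^ m / (2 ^ m * m.factorial)) *
        ((if Even m then (1 : ℝ) else -1) *
          ∑ r ∈ Finset.range (m / 2 + 1),
            (-1 : ℝ) ^ r * (m.choose (2 * r) : ℝ) * 2 ^ r * ((2 * r - 1)‼ : ℝ))) =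
      Real.exp (1 / 4) := by
  have hs := summable_norm_sum_mul_range_of_summable_norm bbAux_norm_summable ggAux_norm_summable
  have ht := tsum_mul_tsum_eq_tsum_sum_range_of_summable_norm bbAux_norm_summable ggAux_norm_summable
  constructor
  · refine hs.congr fun m => ?_
    rw [Real.norm_eq_abs, ← term_eq m]
  · have := tsum_congr (L := SummationFilter.unconditional ℕ) term_eq
    rw [this, ← ht, bbAux_tsum, ggAux_tsum, ← Real.exp_add]
    norm_num
end

section
/- There exists a constant C > 0 such that for all integers n, m with 0 ≤ m ≤ n-1 and n ≥ 1: 1 ≤ Π_{r=0}^{m-1} (n - m + 2r)/(n - m - 1/2 + r) ≤ exp(C·m(m+1)/n). -/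
/-!
Writing `d = n - m - 1/2 + r`, the `r`-th factor is `1 + (r + 1/2)/d` with `r + 1/2 ≤ d`, so it is at
least 1. For `r ≤ m` it is even at most `1 + 4(m+1)/n`: if `4d ≥ n` this follows from
`r + 1/2 ≤ m + 1`, and otherwise `n < 4(m+1)/3`. Bounding `1 + x ≤ exp x` factorwise gives the
constant `C = 4`.
-/

open Finset Real

theorem prod_le_exp_card_mul_of_le_one_add {ι : Type*} {s : Finset ι} {f : ι → ℝ} {x : ℝ}
    (h0 : ∀ i ∈ s, 0 ≤ f i) (h : ∀ i ∈ s, f i ≤ 1 + x) : ∏ i ∈ s, f i ≤ exp (#s * x) :=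
  calc ∏ i ∈ s, f i ≤ ∏ _i ∈ s, exp x :=
        prod_le_prod h0 fun i hi => (h i hi).trans (by linarith [add_one_le_exp x])
    _ = exp (#s * x) := by rw [prod_const, ← exp_nat_mul]

theorem one_le_quotient_factor {n m r : ℝ} (hr : 0 ≤ r) (hmn : m + 1 / 2 < n) :
    1 ≤ (n - m + 2 * r) / (n - m - 1 / 2 + r) := by
  rw [one_le_div (by linarith)]
  linarith

theorem quotient_factor_le {n m r : ℝ} (hr : 0 ≤ r) (hrm : r ≤ m) (hmn : m + 1 ≤ n) :
    (n - m + 2 * r) / (n - m - 1 / 2 + r) ≤ 1 + 4 * (m + 1) / n := by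
  have hn : 0 < n := by linarith
  rw [div_le_iff₀ (by linarith), add_mul, one_mul, ← sub_le_iff_le_add', div_mul_eq_mul_div,
    le_div_iff₀ hn]
  rcases le_or_gt n (4 * (n - m - 1 / 2 + r)) with h | h <;> nlinarith

/-- There exists `C > 0` such that for all integers `n ≥ 1` and `0 ≤ m ≤ n-1`,
`1 ≤ Π_{r=0}^{m-1} (n-m+2r)/(n-m-1/2+r) ≤ exp(C·m(m+1)/n)`. -/
theorem prod_quotient_bound :
    ∃ C : ℝ, 0 < C ∧ ∀ n m : ℕ, 1 ≤ n → m + 1 ≤ n →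
      1 ≤ (∏ r ∈ Finset.range m,
            ((n : ℝ) - m + 2 * r) / ((n : ℝ) - m - 1 / 2 + r)) ∧
      (∏ r ∈ Finset.range m,
            ((n : ℝ) - m + 2 * r) / ((n : ℝ) - m - 1 / 2 + r)) ≤
        Real.exp (C * (m * (m + 1)) / n) := by
  refine ⟨4, by norm_num, fun n m _ hm => ?_⟩
  have hmn : (m : ℝ) + 1 ≤ n := by exact_mod_cast hm
  have one_le : ∀ r ∈ range m, 1 ≤ ((n : ℝ) - m + 2 * r) / ((n : ℝ) - m - 1 / 2 + r) :=
    fun r _ => one_le_quotient_factor r.cast_nonneg (by linarith)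
  refine ⟨one_le_prod one_le, ?_⟩
  calc _ ≤ exp (#(range m) * (4 * (m + 1) / n)) :=
        prod_le_exp_card_mul_of_le_one_add (fun r hr => zero_le_one.trans (one_le r hr))
          fun r hr => quotient_factor_le r.cast_nonneg
            (by exact_mod_cast (mem_range.1 hr).le) hmn
    _ = exp (4 * (m * (m + 1)) / n) := by rw [card_range]; ring_nf
end
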